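/- Let D > 0, μ ∈ ℝ, and φ(s) := √(μ²s² + 4D) for s ∈ ℝ (or simply φ := √(c² + 4D) for a constant c = μ·l̇). Define U(x) = 1/2 − ((c + φ)/(2φ))·exp(((−c + φ)/(2D))x) for x ≤ 0 and U(x) = −1/2 + ((−c + φ)/(2φ))·exp(−((c + φ)/(2D))x) for x > 0, where φ = √(c²+4D). Then U is C¹ on ℝ and satisfies D·U'' + c·U' − U = −F(x) for x ≠ 0, where F(x) = 1/2 for x ≤ 0 and −1/2 for x > 0. -/

import Mathlib

/-- The step function F(x) = 1/2 for x ≤ 0, −1/2 for x > 0. -/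
noncomputable def Fstep : ℝ → ℝ := fun x => if x ≤ 0 then 1 / 2 else -1 / 2

/-- The renormalized traveling-front profile U with speed parameter c,
where φ = √(c²+4D). -/
noncomputable def Ufun (D c : ℝ) : ℝ → ℝ := fun x =>
  if x ≤ 0 then
    1 / 2 - (c + Real.sqrt (c ^ 2 + 4 * D)) / (2 * Real.sqrt (c ^ 2 + 4 * D))
      * Real.exp ((-c + Real.sqrt (c ^ 2 + 4 * D)) / (2 * D) * x)
  else
    -1 / 2 + (-c + Real.sqrt (c ^ 2 + 4 * D)) / (2 * Real.sqrt (c ^ 2 + 4 * D))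
      * Real.exp (-((c + Real.sqrt (c ^ 2 + 4 * D)) / (2 * D)) * x)

/-!
Each branch of `U` has the form `k + m e^{r x}` with `r` a root of the characteristic polynomial
`D r² + c r - 1`, so it solves `D u'' + c u' - u = -k`; the root `(-c + φ) / (2D) > 0` is taken
on `x ≤ 0` and `-(c + φ) / (2D) < 0` on `x > 0`, which makes both branches bounded. The
coefficients `(c + φ) / (2φ)` and `(-c + φ) / (2φ)` are chosen so that the values and the slopes
of the two branches agree at `0`, and gluing two `C¹` functions with matching first-order data
gives a `C¹` function.
-/

open Real Filter Topology Set

section Gluing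

variable {g h : ℝ → ℝ} {a x : ℝ}

theorem ite_le_eventuallyEq_left (hx : x < a) :
    (fun y => if y ≤ a then g y else h y) =ᶠ[𝓝 x] g := by
  filter_upwards [Iio_mem_nhds hx] with y hy
  exact if_pos hy.le

theorem ite_le_eventuallyEq_right (hx : a < x) :
    (fun y => if y ≤ a then g y else h y) =ᶠ[𝓝 x] h := by
  filter_upwards [Ioi_mem_nhds hx] with y hy
  exact if_neg (not_le.mpr hy)

theorem hasDerivAt_ite_le {g' h' : ℝ → ℝ} (hg : HasDerivAt g (g' x) x)
    (hh : HasDerivAt h (h' x) x) (h₀ : g a = h a) (h₁ : g' a = h' a) :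
    HasDerivAt (fun y => if y ≤ a then g y else h y) (if x ≤ a then g' x else h' x) x := by
  rcases lt_trichotomy x a with hx | rfl | hx
  · rw [if_pos hx.le]
    exact hg.congr_of_eventuallyEq (ite_le_eventuallyEq_left hx)
  · rw [if_pos le_rfl]
    have hleft : HasDerivWithinAt (fun y => if y ≤ x then g y else h y) (g' x) (Iic x) x :=
      hg.hasDerivWithinAt.congr (fun y hy => if_pos hy) (if_pos le_rfl)
    have hright : HasDerivWithinAt (fun y => if y ≤ x then g y else h y) (g' x) (Ioi x) x :=
      h₁ ▸ hh.hasDerivWithinAt.congr (fun y hy => if_neg (not_le.mpr hy)) (by simp [h₀])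
    simpa using hleft.union (hasDerivWithinAt_Ioi_iff_Ici.mp hright)
  · rw [if_neg (not_le.mpr hx)]
    exact hh.congr_of_eventuallyEq (ite_le_eventuallyEq_right hx)

theorem contDiff_one_ite_le (hg : ContDiff ℝ 1 g) (hh : ContDiff ℝ 1 h) (h₀ : g a = h a)
    (h₁ : deriv g a = deriv h a) : ContDiff ℝ 1 fun y => if y ≤ a then g y else h y := by
  have hderiv (x : ℝ) := hasDerivAt_ite_le (hg.differentiable one_ne_zero x).hasDerivAt
    (hh.differentiable one_ne_zero x).hasDerivAt h₀ h₁
  refine contDiff_one_iff_deriv.mpr ⟨fun x => (hderiv x).differentiableAt, ?_⟩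
  rw [funext fun x => (hderiv x).deriv]
  exact (hg.continuous_deriv le_rfl).if_le (hh.continuous_deriv le_rfl) continuous_id
    continuous_const fun x hx => hx ▸ h₁

end Gluing

theorem hasDerivAt_const_add_mul_exp (k m r x : ℝ) :
    HasDerivAt (fun y => k + m * exp (r * y)) (m * r * exp (r * x)) x :=
  ((((hasDerivAt_id' x).const_mul r).exp.const_mul m).const_add k).congr_deriv (by ring)

theorem ode_const_add_mul_exp {D c r : ℝ} (hr : D * (r * r) + c * r + -1 = 0) (k m x : ℝ) :
    D * deriv (deriv fun y => k + m * exp (r * y)) x + c * deriv (fun y => k + m * exp (r * y)) x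
      - (k + m * exp (r * x)) = -k := by
  have h₁ : deriv (fun y => k + m * exp (r * y)) = fun y => 0 + m * r * exp (r * y) := by
    funext y; simpa using (hasDerivAt_const_add_mul_exp k m r y).deriv
  rw [h₁, (hasDerivAt_const_add_mul_exp 0 (m * r) r x).deriv]
  linear_combination m * exp (r * x) * hr

theorem abs_const_add_mul_exp_le {r x : ℝ} (hrx : r * x ≤ 0) (k m : ℝ) :
    |k + m * exp (r * x)| ≤ |k| + |m| := by
  calc |k + m * exp (r * x)| ≤ |k| + |m| * exp (r * x) := by
        simpa [abs_mul] using abs_add_le k (m * exp (r * x))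
    _ ≤ |k| + |m| := by
        gcongr
        exact mul_le_of_le_one_right (abs_nonneg m) (exp_le_one_iff.mpr hrx)

theorem abs_ite_const_add_mul_exp_le {r₁ r₂ : ℝ} (hr₁ : 0 ≤ r₁) (hr₂ : r₂ ≤ 0)
    (k₁ m₁ k₂ m₂ x : ℝ) :
    |if x ≤ 0 then k₁ + m₁ * exp (r₁ * x) else k₂ + m₂ * exp (r₂ * x)| ≤
      max (|k₁| + |m₁|) (|k₂| + |m₂|) := by
  split_ifs with hx
  · have hrx : r₁ * x ≤ 0 := mul_nonpos_of_nonneg_of_nonpos hr₁ hx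
    exact (abs_const_add_mul_exp_le hrx _ _).trans (le_max_left _ _)
  · have hrx : r₂ * x ≤ 0 := mul_nonpos_of_nonpos_of_nonneg hr₂ (le_of_not_ge hx)
    exact (abs_const_add_mul_exp_le hrx _ _).trans (le_max_right _ _)

/-- U is C¹ on ℝ, bounded, and satisfies D·U'' + c·U' − U = −F(x) for x ≠ 0. -/
theorem stmt15 (D c : ℝ) (hD : 0 < D) :
    ContDiff ℝ 1 (Ufun D c) ∧
    (∀ x : ℝ, x ≠ 0 →
      D * deriv (deriv (Ufun D c)) x + c * deriv (Ufun D c) x - Ufun D c x = -Fstep x) ∧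
    (∃ C : ℝ, ∀ x : ℝ, |Ufun D c x| ≤ C) := by
  set φ := √(c ^ 2 + 4 * D)
  have hφ₀ : 0 < φ := sqrt_pos.mpr (by positivity)
  obtain ⟨hcφ, hφc⟩ : -φ ≤ c ∧ c ≤ φ := abs_le.mp (abs_le_sqrt (by linarith))
  have hdisc : discrim D c (-1) = φ * φ := by rw [discrim, mul_self_sqrt (by positivity)]; ring
  set A := (c + φ) / (2 * φ)
  set B := (-c + φ) / (2 * φ)
  set r₁ := (-c + φ) / (2 * D)
  set r₂ := -((c + φ) / (2 * D))
  have hU : Ufun D c = fun x =>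
      if x ≤ 0 then 1 / 2 + -A * exp (r₁ * x) else -1 / 2 + B * exp (r₂ * x) := by
    funext x; simp only [Ufun]; split_ifs <;> ring
  have hr₁ : D * (r₁ * r₁) + c * r₁ + -1 = 0 :=
    (quadratic_eq_zero_iff hD.ne' hdisc _).mpr (.inl rfl)
  have hr₂ : D * (r₂ * r₂) + c * r₂ + -1 = 0 :=
    (quadratic_eq_zero_iff hD.ne' hdisc _).mpr (.inr (by ring))
  rw [hU]
  refine ⟨contDiff_one_ite_le (by fun_prop) (by fun_prop) ?_ ?_, fun x hx => ?_, ?_⟩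
  · simp only [A, B, mul_zero, exp_zero, mul_one]
    field_simp; ring
  · rw [(hasDerivAt_const_add_mul_exp _ _ _ 0).deriv, (hasDerivAt_const_add_mul_exp _ _ _ 0).deriv]
    simp only [A, B, r₁, r₂, mul_zero, exp_zero, mul_one]
    field_simp
  · rcases hx.lt_or_gt with hx | hx
    · rw [(ite_le_eventuallyEq_left hx).deriv.deriv_eq, (ite_le_eventuallyEq_left hx).deriv_eq]
      simpa [Fstep, hx.le] using ode_const_add_mul_exp hr₁ (1 / 2) (-A) x
    · rw [(ite_le_eventuallyEq_right hx).deriv.deriv_eq, (ite_le_eventuallyEq_right hx).deriv_eq]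
      simpa [Fstep, hx.not_ge] using ode_const_add_mul_exp hr₂ (-1 / 2) B x
  · exact ⟨_, abs_ite_const_add_mul_exp_le (div_nonneg (by linarith) (by positivity))
      (neg_nonpos.mpr (div_nonneg (by linarith) (by positivity))) _ _ _ _⟩
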